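/- arXiv:1604.08015 — 5 statements merged into one kernel-verified Lean document; each statement's English description precedes it below -/
import Mathlib

section
/- For every complex number z = x + iy with x real and y a nonzero real number, Re(Γ'(z)/Γ(z)) ≥ log|z| − π/(2|y|). -/
/-!
Off the poles, `digamma s = -γ + ∑ₖ ((k + 1)⁻¹ - (s + k)⁻¹)`: both sides are analytic on the slit
plane, and on `(0, ∞)` both are monotone solutions of `f (x + 1) = f x + 1 / x` with value `-γ`
at `1`, which determines them. Hence `Re ψ(z) = -γ + ∑ₖ ((k + 1)⁻¹ - h k)` with
`h t = Re (z + t)⁻¹`. The trapezoid rule bounds `∑_{k ≤ n} h k` by `∫₀ⁿ h = log ‖z + n‖ - log ‖z‖`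
plus `(h 0 + h n) / 2` plus half of `∫₀ⁿ |h'| ≤ ∫₀^∞ ‖z + t‖⁻² dt = (π/2 - arctan (x / |y|)) / |y|`,
and together with `h 0 / 2` this error is at most `π / (2 |y|)`. Finally
`H_{n+1} - log ‖z + n‖ → γ` and `h n → 0`.
-/

open Complex Filter Topology Set

local notation "γ" => Real.eulerMascheroniConstant

theorem tsum_sub_add_one_eq {G : Type*} [AddCommGroup G] [TopologicalSpace G]
    [IsTopologicalAddGroup G] [T2Space G] {f : ℕ → G} (hs : Summable fun n => f n - f (n + 1))
    (hf : Tendsto f atTop (𝓝 0)) : ∑' n, (f n - f (n + 1)) = f 0 := by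
  refine tendsto_nhds_unique hs.hasSum.tendsto_sum_nat ?_
  simp_rw [Finset.sum_range_sub']
  simpa using tendsto_const_nhds.sub hf

theorem summable_inv_add_one_sq : Summable (fun k : ℕ => (((k : ℝ) + 1) ^ 2)⁻¹) := by
  simpa using (summable_nat_add_iff 1).2 (Real.summable_nat_pow_inv.2 one_lt_two)

theorem tendsto_inv_add_natCast (s : ℂ) : Tendsto (fun n : ℕ => (s + n)⁻¹) atTop (𝓝 0) := by
  simpa using tendsto_add_mul_div_add_mul_atTop_nhds (1 : ℂ) s 0 one_ne_zero

theorem eqOn_Ioi_of_monotoneOn_of_add_one {u v : ℝ → ℝ} (hu : MonotoneOn u (Ioi 0))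
    (hv : MonotoneOn v (Ioi 0)) (hu₁ : ∀ x > 0, u (x + 1) = u x + x⁻¹)
    (hv₁ : ∀ x > 0, v (x + 1) = v x + x⁻¹) (h₁ : u 1 = v 1) : EqOn u v (Ioi 0) := by
  have hshift : ∀ x > 0, ∀ n : ℕ, u (x + n) - v (x + n) = u x - v x := by
    intro x hx n
    induction n with
    | zero => simp
    | succ n ih =>
      rw [Nat.cast_succ, ← add_assoc, hu₁ _ (by positivity), hv₁ _ (by positivity)]
      linarith
  have hnat : ∀ m : ℕ, 1 ≤ m → u m = v m := by
    intro m hm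
    have := hshift 1 one_pos (m - 1)
    rw [Nat.cast_sub hm, Nat.cast_one, add_sub_cancel] at this
    linarith
  -- `u - v` is 1-periodic, while between consecutive integers `m ≤ x + n ≤ m + 1` both `u` and `v`
  -- vary by at most `1 / m`.
  have hbound : ∀ x > 0, ∀ n : ℕ, 1 ≤ n → |u x - v x| ≤ (n : ℝ)⁻¹ := by
    intro x hx n hn
    set m := ⌊x⌋₊ + n
    have hn₀ : (0 : ℝ) < n := by exact_mod_cast hn
    have hnm : (n : ℝ) ≤ m := by simp [m]
    have hlo : (m : ℝ) ≤ x + n := by simp only [m, Nat.cast_add]; linarith [Nat.floor_le hx.le]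
    have hhi : x + n ≤ m + 1 := by
      simp only [m, Nat.cast_add]; linarith [Nat.lt_floor_add_one x]
    have hm₀ : (0 : ℝ) < m := hn₀.trans_le hnm
    have hxn : (0 : ℝ) < x + n := by positivity
    have hm₁ : (0 : ℝ) < m + 1 := by positivity
    have hum := hu hm₀ hxn hlo
    have hum' := (hu hxn hm₁ hhi).trans_eq (hu₁ _ hm₀)
    have hvm := hv hm₀ hxn hlo
    have hvm' := (hv hxn hm₁ hhi).trans_eq (hv₁ _ hm₀)
    have hmn : (m : ℝ)⁻¹ ≤ (n : ℝ)⁻¹ := inv_anti₀ hn₀ hnm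
    have huv : u m = v m := hnat m (by omega)
    rw [← hshift x hx n, abs_le]
    constructor <;> linarith
  intro x hx
  have : |u x - v x| ≤ 0 := ge_of_tendsto tendsto_inv_atTop_nhds_zero_nat
    (eventually_atTop.2 ⟨1, hbound x hx⟩)
  exact sub_eq_zero.mp (abs_nonpos_iff.mp this)

section Trapezoid

variable {h h' : ℝ → ℝ}

theorem trapezoid_le_integral_add (hd : ∀ t, HasDerivAt h (h' t) t) (hc : Continuous h') (a : ℝ) :
    (h a + h (a + 1)) / 2 ≤ (∫ t in a..a + 1, h t) + (∫ t in a..a + 1, |h' t|) / 2 := by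
  have hcont : Continuous h := continuous_iff_continuousAt.2 fun t => (hd t).continuousAt
  have hvar (c d : ℝ) (hcd : c ≤ d) : |h d - h c| ≤ ∫ t in c..d, |h' t| := by
    rw [← intervalIntegral.integral_eq_sub_of_hasDerivAt (fun t _ => hd t)
      (hc.intervalIntegrable c d)]
    exact intervalIntegral.abs_integral_le_integral_abs hcd
  have hpt : ∀ t ∈ Icc a (a + 1),
      h a + h (a + 1) - 2 * h t ≤ ∫ u in a..a + 1, |h' u| := by
    intro t ht
    have h₁ := (abs_sub_comm _ _).trans_le (hvar a t ht.1)
    have h₂ := hvar t (a + 1) ht.2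
    rw [← intervalIntegral.integral_add_adjacent_intervals (b := t)
      (hc.abs.intervalIntegrable _ _) (hc.abs.intervalIntegrable _ _)]
    linarith [le_abs_self (h a - h t), le_abs_self (h (a + 1) - h t)]
  have : (∫ t in a..a + 1, (h a + h (a + 1) - 2 * h t)) ≤
      ∫ _ in a..a + 1, ∫ u in a..a + 1, |h' u| := intervalIntegral.integral_mono_on (by linarith)
    ((continuous_const.sub (hcont.const_mul 2)).intervalIntegrable _ _)
    (intervalIntegrable_const (μ := MeasureTheory.volume)) hpt
  rw [intervalIntegral.integral_sub intervalIntegrable_const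
    ((hcont.const_mul 2).intervalIntegrable _ _), intervalIntegral.integral_const_mul] at this
  simp only [intervalIntegral.integral_const, add_sub_cancel_left, one_smul] at this
  linarith

theorem sum_range_succ_le_integral_add (hd : ∀ t, HasDerivAt h (h' t) t) (hc : Continuous h')
    (n : ℕ) : ∑ k ∈ Finset.range (n + 1), h k ≤
      (∫ t in (0 : ℝ)..n, h t) + (h 0 + h n) / 2 + (∫ t in (0 : ℝ)..n, |h' t|) / 2 := by
  have hcont : Continuous h := continuous_iff_continuousAt.2 fun t => (hd t).continuousAt
  induction n with
  | zero => simp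
  | succ n ih =>
    rw [Finset.sum_range_succ, Nat.cast_succ,
      ← intervalIntegral.integral_add_adjacent_intervals (b := (n : ℝ))
        (hcont.intervalIntegrable _ _) (hcont.intervalIntegrable _ _),
      ← intervalIntegral.integral_add_adjacent_intervals (b := (n : ℝ))
        (hc.abs.intervalIntegrable _ _) (hc.abs.intervalIntegrable _ _)]
    linarith [trapezoid_le_integral_add hd hc n]

end Trapezoid

theorem div_one_add_sq_le_pi_div_two_add_arctan (u : ℝ) :
    u / (1 + u ^ 2) ≤ Real.pi / 2 + Real.arctan u := by
  rcases le_or_gt u 0 with hu | hu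
  · have : u / (1 + u ^ 2) ≤ 0 := div_nonpos_of_nonpos_of_nonneg hu (by positivity)
    linarith [Real.neg_pi_div_two_lt_arctan u]
  · have : u / (1 + u ^ 2) ≤ 1 / 2 := by
      rw [div_le_div_iff₀ (by positivity) two_pos]
      nlinarith [sq_nonneg (u - 1)]
    have : 0 < Real.arctan u := by simpa using Real.arctan_strictMono hu
    linarith [Real.pi_gt_three]

theorem ne_neg_natCast_of_pos {x : ℝ} (hx : 0 < x) (m : ℕ) : x ≠ -m := by
  linarith [(m.cast_nonneg : (0 : ℝ) ≤ m)]

theorem Complex.ne_neg_natCast_of_mem_slitPlane {s : ℂ} (hs : s ∈ slitPlane) (m : ℕ) : s ≠ -m := by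
  rintro rfl
  exact (neg_ofReal_mem_slitPlane.mp (by exact_mod_cast hs)).not_ge m.cast_nonneg

theorem Complex.add_natCast_ne_zero {s : ℂ} (hs : ∀ m : ℕ, s ≠ -m) (k : ℕ) : s + k ≠ 0 :=
  fun h => hs k (eq_neg_of_add_eq_zero_left h)

theorem Complex.natCast_le_norm_add {s : ℂ} {R : ℝ} (hs : ‖s‖ ≤ R) {N : ℕ} (hN : R + 1 ≤ N)
    (k : ℕ) : (k : ℝ) + 1 ≤ ‖s + ↑(k + N)‖ := by
  have := norm_sub_le (s + ↑(k + N)) s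
  rw [add_sub_cancel_left, norm_natCast, Nat.cast_add] at this
  linarith

theorem Complex.deriv_Gamma_ofReal {x : ℝ} (hx : ∀ m : ℕ, x ≠ -m) :
    deriv Gamma (x : ℂ) = deriv Real.Gamma x := by
  have hC := (differentiableAt_Gamma (x : ℂ) (by exact_mod_cast hx)).hasDerivAt.comp_ofReal
  simp_rw [Gamma_ofReal] at hC
  exact hC.unique (Real.differentiableAt_Gamma hx).hasDerivAt.ofReal_comp

theorem Complex.digamma_ofReal {x : ℝ} (hx : ∀ m : ℕ, x ≠ -m) :
    digamma x = (deriv (Real.log ∘ Real.Gamma) x : ℝ) := by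
  rw [digamma_def, logDeriv_apply, deriv_Gamma_ofReal hx, Gamma_ofReal, ← ofReal_div,
    Function.comp_def, deriv.log (Real.differentiableAt_Gamma hx) (Real.Gamma_ne_zero hx)]

noncomputable def digammaTerm (s : ℂ) (k : ℕ) : ℂ := (k + 1 : ℂ)⁻¹ - (s + k)⁻¹

noncomputable def digammaSeries (s : ℂ) : ℂ := -γ + ∑' k, digammaTerm s k

theorem digammaTerm_eq {s : ℂ} {k : ℕ} (hs : s + k ≠ 0) :
    digammaTerm s k = (s - 1) / ((k + 1) * (s + k)) := by
  have : (k + 1 : ℂ) ≠ 0 := by exact_mod_cast k.succ_ne_zero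
  rw [digammaTerm]
  field_simp
  ring

theorem norm_digammaTerm_add_le {s : ℂ} {R : ℝ} (hs : ‖s‖ ≤ R) {N : ℕ} (hN : R + 1 ≤ N)
    (k : ℕ) : ‖digammaTerm s (k + N)‖ ≤ (R + 1) * (((k : ℝ) + 1) ^ 2)⁻¹ := by
  have hden := natCast_le_norm_add hs hN k
  have hk : (0 : ℝ) < k + 1 := by positivity
  have hnum : ‖s - 1‖ ≤ R + 1 := (norm_sub_le s 1).trans (by simpa using hs)
  have hk' : (k : ℝ) + 1 ≤ ‖(↑(k + N) + 1 : ℂ)‖ := by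
    rw [show (↑(k + N) + 1 : ℂ) = ↑(k + N + 1) by push_cast; ring, norm_natCast]
    push_cast
    linarith [(N.cast_nonneg : (0 : ℝ) ≤ N)]
  rw [digammaTerm_eq (norm_pos_iff.mp (hk.trans_le hden)), norm_div, norm_mul, ← div_eq_mul_inv,
    sq]
  have : 0 ≤ R + 1 := by linarith [norm_nonneg s]
  gcongr

theorem summable_digammaTerm (s : ℂ) : Summable (digammaTerm s) := by
  have hN := Nat.le_ceil (‖s‖ + 1)
  refine (summable_nat_add_iff ⌈‖s‖ + 1⌉₊).mp ?_
  exact .of_norm_bounded (summable_inv_add_one_sq.mul_left _)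
    (norm_digammaTerm_add_le le_rfl hN)

theorem differentiableAt_digammaTerm {s : ℂ} {k : ℕ} (hs : s + k ≠ 0) :
    DifferentiableAt ℂ (fun s => digammaTerm s k) s :=
  (differentiableAt_const _).sub ((differentiableAt_id.add_const _).inv hs)

theorem differentiableAt_digammaSeries {w : ℂ} (hw : ∀ m : ℕ, w ≠ -m) :
    DifferentiableAt ℂ digammaSeries w := by
  set R := ‖w‖ + 1
  set N := ⌈R + 1⌉₊
  have hsplit : digammaSeries = fun s => -γ +
      ((∑ k ∈ Finset.range N, digammaTerm s k) + ∑' k, digammaTerm s (k + N)) := by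
    ext s
    rw [digammaSeries, (summable_digammaTerm s).sum_add_tsum_nat_add N]
  have htail : DifferentiableOn ℂ (fun s => ∑' k, digammaTerm s (k + N)) (Metric.ball 0 R) := by
    refine differentiableOn_tsum_of_summable_norm (summable_inv_add_one_sq.mul_left (R + 1))
      (fun k s hs => ?_) Metric.isOpen_ball fun k s hs => ?_
    · have := natCast_le_norm_add (mem_ball_zero_iff.mp hs).le (Nat.le_ceil _) k
      refine (differentiableAt_digammaTerm (norm_pos_iff.mp ?_)).differentiableWithinAt
      exact (by positivity : (0 : ℝ) < k + 1).trans_le this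
    · exact norm_digammaTerm_add_le (mem_ball_zero_iff.mp hs).le (Nat.le_ceil _) k
  rw [hsplit]
  refine (differentiableAt_const _).add ((DifferentiableAt.fun_sum fun k _ =>
    differentiableAt_digammaTerm (add_natCast_ne_zero hw k)).add ?_)
  exact htail.differentiableAt (Metric.isOpen_ball.mem_nhds (by simp [R]))

theorem digammaSeries_add_one (s : ℂ) : digammaSeries (s + 1) = digammaSeries s + s⁻¹ := by
  have hterm : ∀ k : ℕ,
      digammaTerm (s + 1) k = digammaTerm s k + ((s + k)⁻¹ - (s + ↑(k + 1))⁻¹) := by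
    intro k
    simp only [digammaTerm]
    push_cast
    ring_nf
  have hsum : Summable fun k : ℕ => (s + k)⁻¹ - (s + ↑(k + 1))⁻¹ :=
    ((summable_digammaTerm _).sub (summable_digammaTerm s)).congr fun k => by
      rw [hterm, add_sub_cancel_left]
  have htel : ∑' k : ℕ, ((s + k)⁻¹ - (s + ↑(k + 1))⁻¹) = s⁻¹ := by
    simpa using tsum_sub_add_one_eq hsum (tendsto_inv_add_natCast s)
  rw [digammaSeries, digammaSeries, tsum_congr hterm, (summable_digammaTerm s).tsum_add hsum,
    htel, add_assoc]

theorem digammaSeries_ofReal (x : ℝ) :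
    digammaSeries x = ↑(-γ + ∑' k : ℕ, (((k : ℝ) + 1)⁻¹ - (x + k)⁻¹)) := by
  rw [digammaSeries, ofReal_add, ofReal_tsum]
  push_cast
  rfl

theorem monotoneOn_re_digammaSeries_ofReal :
    MonotoneOn (fun x : ℝ => (digammaSeries x).re) (Ioi 0) := by
  have hsum (x : ℝ) : Summable fun k : ℕ => ((k : ℝ) + 1)⁻¹ - (x + k)⁻¹ :=
    Complex.summable_ofReal.mp <| (summable_digammaTerm x).congr fun k => by
      simp [digammaTerm]
  intro a ha b _ hab
  simp only [digammaSeries_ofReal, ofReal_re]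
  gcongr -γ + ?_
  refine (hsum a).tsum_le_tsum (fun k => ?_) (hsum b)
  have : 0 < a + k := by have := ha.out; positivity
  gcongr

theorem digamma_ofReal_eq_digammaSeries {x : ℝ} (hx : 0 < x) : digamma x = digammaSeries x := by
  have hΓ : ∀ x > (0 : ℝ), digamma x = (deriv (Real.log ∘ Real.Gamma) x : ℝ) := fun x hx =>
    digamma_ofReal (ne_neg_natCast_of_pos hx)
  have hu : MonotoneOn (deriv (Real.log ∘ Real.Gamma)) (Ioi 0) :=
    Real.convexOn_log_Gamma.monotoneOn_deriv fun x hx =>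
      ((Real.differentiableAt_Gamma (ne_neg_natCast_of_pos hx)).log
        (Real.Gamma_pos_of_pos hx).ne')
  have hu₁ : ∀ x > (0 : ℝ), deriv (Real.log ∘ Real.Gamma) (x + 1) =
      deriv (Real.log ∘ Real.Gamma) x + x⁻¹ := fun x hx => by
    apply ofReal_injective
    push_cast
    rw [← hΓ x hx, ← hΓ (x + 1) (by positivity), ofReal_add, ofReal_one,
      digamma_apply_add_one _ (by exact_mod_cast ne_neg_natCast_of_pos hx)]
  have hv₁ : ∀ x > (0 : ℝ), (digammaSeries ↑(x + 1)).re = (digammaSeries x).re + x⁻¹ :=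
    fun x _ => by simp [digammaSeries_add_one, ← ofReal_inv]
  have h₁ : deriv (Real.log ∘ Real.Gamma) 1 = (digammaSeries (1 : ℝ)).re := by
    apply ofReal_injective
    rw [← hΓ 1 one_pos, digammaSeries_ofReal]
    simp [digamma_one, add_comm]
  have := eqOn_Ioi_of_monotoneOn_of_add_one hu monotoneOn_re_digammaSeries_ofReal hu₁ hv₁ h₁ hx
  rw [hΓ x hx, this]
  simp only [digammaSeries_ofReal, ofReal_re]

theorem analyticOnNhd_digamma : AnalyticOnNhd ℂ digamma slitPlane := by
  have hΓ : AnalyticOnNhd ℂ Gamma slitPlane :=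
    DifferentiableOn.analyticOnNhd (fun s hs => (differentiableAt_Gamma s
      (ne_neg_natCast_of_mem_slitPlane hs)).differentiableWithinAt) isOpen_slitPlane
  exact hΓ.deriv.div hΓ fun s hs => Gamma_ne_zero (ne_neg_natCast_of_mem_slitPlane hs)

theorem analyticOnNhd_digammaSeries : AnalyticOnNhd ℂ digammaSeries slitPlane :=
  DifferentiableOn.analyticOnNhd (fun _ hs => (differentiableAt_digammaSeries
    (ne_neg_natCast_of_mem_slitPlane hs)).differentiableWithinAt) isOpen_slitPlane

theorem digamma_eq_digammaSeries : EqOn digamma digammaSeries slitPlane := by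
  refine analyticOnNhd_digamma.eqOn_of_preconnected_of_frequently_eq analyticOnNhd_digammaSeries
    (starConvex_one_slitPlane.isPathConnected one_mem_slitPlane).isConnected.isPreconnected
    one_mem_slitPlane ?_
  have hreal : Tendsto ((↑) : ℝ → ℂ) (𝓝[>] 1) (𝓝[≠] 1) :=
    tendsto_nhdsWithin_iff.mpr
      ⟨by simpa using (continuous_ofReal.tendsto 1).mono_left nhdsWithin_le_nhds,
        eventually_nhdsWithin_of_forall fun x (hx : 1 < x) => ofReal_ne_one.mpr hx.ne'⟩
  refine hreal.frequently (Eventually.frequently ?_)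
  filter_upwards [self_mem_nhdsWithin] with x hx
  exact digamma_ofReal_eq_digammaSeries (one_pos.trans hx)

theorem norm_add_ofReal_sq (z : ℂ) (t : ℝ) : ‖z + t‖ ^ 2 = (z.re + t) ^ 2 + z.im ^ 2 := by
  rw [Complex.sq_norm, normSq_apply]
  simp [sq]

section InvAdd

variable {z : ℂ} (hz : z.im ≠ 0)
include hz

theorem add_ofReal_ne_zero (t : ℝ) : z + t ≠ 0 := fun h => hz (by simpa using congrArg im h)

theorem hasDerivAt_re_inv_add (t : ℝ) :
    HasDerivAt (fun t : ℝ => ((z + t)⁻¹).re) (-((z + t) ^ 2)⁻¹).re t := by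
  have := ((hasDerivAt_id (t : ℂ)).const_add z).inv (add_ofReal_ne_zero hz t)
  simpa [neg_div] using this.real_of_complex

theorem continuous_deriv_re_inv_add : Continuous fun t : ℝ => (-((z + t) ^ 2)⁻¹).re :=
  continuous_re.comp <| ((continuous_const.add continuous_ofReal).pow 2).inv₀
    (fun t => pow_ne_zero 2 (add_ofReal_ne_zero hz t)) |>.neg

theorem continuous_inv_norm_add_sq : Continuous fun t : ℝ => (‖z + t‖ ^ 2)⁻¹ :=
  Continuous.inv₀ (by fun_prop) fun t =>
    pow_ne_zero 2 (norm_ne_zero_iff.2 (add_ofReal_ne_zero hz t))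

theorem hasDerivAt_log_norm_add (t : ℝ) :
    HasDerivAt (fun t : ℝ => Real.log ‖z + t‖) ((z + t)⁻¹).re t := by
  have := ((hasDerivAt_id (t : ℂ)).const_add z).clog (mem_slitPlane_iff.2 (Or.inr (by simpa)))
  have := this.real_of_complex
  simp only [log_re] at this
  simpa using this

theorem hasDerivAt_arctan_div_abs_im (t : ℝ) :
    HasDerivAt (fun t : ℝ => Real.arctan ((z.re + t) / |z.im|) / |z.im|) (‖z + t‖ ^ 2)⁻¹ t := by
  have hb : 0 < |z.im| := abs_pos.2 hz
  have := (((hasDerivAt_id t).const_add z.re).div_const |z.im|).arctan.div_const |z.im|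
  simp only [id] at this
  refine this.congr_deriv ?_
  rw [norm_add_ofReal_sq]
  field_simp
  rw [sq_abs]
  ring

theorem re_inv_add_integral_inv_norm_sq_le (T : ℝ) :
    (z⁻¹).re + ∫ t in (0 : ℝ)..T, (‖z + t‖ ^ 2)⁻¹ ≤ Real.pi / |z.im| := by
  have hb : 0 < |z.im| := abs_pos.2 hz
  rw [intervalIntegral.integral_eq_sub_of_hasDerivAt (fun t _ => hasDerivAt_arctan_div_abs_im hz t)
    ((continuous_inv_norm_add_sq hz).intervalIntegrable _ _)]
  have hre : (z⁻¹).re = (z.re / |z.im|) / (1 + (z.re / |z.im|) ^ 2) / |z.im| := by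
    rw [inv_re, normSq_apply]
    field_simp
    rw [sq_abs]
    ring
  have := div_one_add_sq_le_pi_div_two_add_arctan (z.re / |z.im|)
  have := Real.arctan_lt_pi_div_two ((z.re + T) / |z.im|)
  rw [hre, add_zero, ← sub_div, ← add_div, div_le_div_iff_of_pos_right hb]
  linarith

theorem sum_range_succ_re_inv_add_le (n : ℕ) :
    ∑ k ∈ Finset.range (n + 1), ((z + k)⁻¹).re ≤
      Real.log ‖z + n‖ - Real.log ‖z‖ + ((z + n)⁻¹).re / 2 + Real.pi / (2 * |z.im|) := by
  have hsum := sum_range_succ_le_integral_add (hasDerivAt_re_inv_add hz)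
    (continuous_deriv_re_inv_add hz) n
  have hint : ∫ t in (0 : ℝ)..n, ((z + t)⁻¹).re = Real.log ‖z + n‖ - Real.log ‖z‖ := by
    rw [intervalIntegral.integral_eq_sub_of_hasDerivAt (fun t _ => hasDerivAt_log_norm_add hz t)
      ((continuous_iff_continuousAt.2 fun t => (hasDerivAt_re_inv_add hz t).continuousAt)
        |>.intervalIntegrable _ _)]
    simp
  have hderiv : ∫ t in (0 : ℝ)..n, |(-((z + t) ^ 2)⁻¹).re| ≤ ∫ t in (0 : ℝ)..n, (‖z + t‖ ^ 2)⁻¹ :=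
    intervalIntegral.integral_mono_on n.cast_nonneg
      ((continuous_deriv_re_inv_add hz).abs.intervalIntegrable _ _)
      ((continuous_inv_norm_add_sq hz).intervalIntegrable _ _) fun t _ =>
        (abs_re_le_norm _).trans (by simp)
  have herr := re_inv_add_integral_inv_norm_sq_le hz n
  simp only [ofReal_natCast, ofReal_zero, add_zero] at hsum
  rw [hint] at hsum
  have : Real.pi / (2 * |z.im|) = Real.pi / |z.im| / 2 := by ring
  linarith

end InvAdd

theorem tendsto_re_inv_add_natCast (z : ℂ) :
    Tendsto (fun n : ℕ => ((z + n)⁻¹).re) atTop (𝓝 0) := by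
  have := (continuous_re.tendsto 0).comp (tendsto_inv_add_natCast z)
  rwa [zero_re] at this

theorem tendsto_harmonic_sub_log_norm_add (z : ℂ) :
    Tendsto (fun n : ℕ => (harmonic (n + 1) : ℝ) - Real.log ‖z + n‖) atTop (𝓝 γ) := by
  have hratio : Tendsto (fun n : ℕ => (z + n) / (n + 1)) atTop (𝓝 1) := by
    simpa [add_comm] using tendsto_add_mul_div_add_mul_atTop_nhds z 1 1 one_ne_zero
  have hlog : Tendsto (fun n : ℕ => Real.log ‖(z + n) / (n + 1)‖) atTop (𝓝 0) := by
    have := ((Real.continuousAt_log (by simp)).tendsto.comp (continuous_norm.tendsto 1)).comp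
      hratio
    rwa [Function.comp_def, norm_one, Real.log_one] at this
  have hH := Real.tendsto_harmonic_sub_log.comp (tendsto_add_atTop_nat 1)
  have := hH.sub hlog
  rw [sub_zero] at this
  refine this.congr' ?_
  filter_upwards [hratio.eventually_ne zero_ne_one.symm] with n hn
  have hn' : ‖z + n‖ ≠ 0 := norm_ne_zero_iff.2 (div_ne_zero_iff.mp hn).1
  have hnorm : ‖(n : ℂ) + 1‖ = n + 1 := by exact_mod_cast Complex.norm_natCast (n + 1)
  rw [Function.comp_apply, norm_div, hnorm, Real.log_div hn' (by positivity)]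
  push_cast
  ring

theorem log_norm_sub_le_re_digammaSeries {z : ℂ} (hz : z.im ≠ 0) :
    Real.log ‖z‖ - Real.pi / (2 * |z.im|) ≤ (digammaSeries z).re := by
  set ε := Real.pi / (2 * |z.im|)
  have hpartial (n : ℕ) : ∑ k ∈ Finset.range n, (digammaTerm z k).re =
      harmonic n - ∑ k ∈ Finset.range n, ((z + k)⁻¹).re := by
    simp only [digammaTerm, sub_re, Finset.sum_sub_distrib, harmonic]
    push_cast
    congr 1
    refine Finset.sum_congr rfl fun k _ => ?_
    rw [← ofReal_natCast, ← ofReal_one, ← ofReal_add, ← ofReal_inv, ofReal_re]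
  have hlow (n : ℕ) : (harmonic (n + 1) - Real.log ‖z + n‖) + Real.log ‖z‖ - ((z + n)⁻¹).re / 2 - ε
      ≤ ∑ k ∈ Finset.range (n + 1), (digammaTerm z k).re := by
    rw [hpartial]
    linarith [sum_range_succ_re_inv_add_le hz n]
  have hlim := ((((tendsto_harmonic_sub_log_norm_add z).add_const (Real.log ‖z‖)).sub
    ((tendsto_re_inv_add_natCast z).div_const 2)).sub_const ε)
  have hseries := ((hasSum_re (summable_digammaTerm z).hasSum).tendsto_sum_nat).comp
    (tendsto_add_atTop_nat 1)
  have := le_of_tendsto_of_tendsto' hlim hseries hlow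
  rw [digammaSeries, add_re, neg_re, ofReal_re]
  linarith

theorem re_digamma_lower_bound (z : ℂ) (hy : z.im ≠ 0) :
    (deriv Complex.Gamma z / Complex.Gamma z).re ≥
      Real.log ‖z‖ - Real.pi / (2 * |z.im|) := by
  rw [← logDeriv_apply, ← digamma_def, digamma_eq_digammaSeries (mem_slitPlane_iff.2 (.inr hy))]
  exact log_norm_sub_le_re_digammaSeries hy
end

section
/- For every real σ > 1 and every integer N ≥ 3, the sum over primes p > N of (log p)/(p^σ − 1) is at most N/(N^σ − 1) · ( (log N)/(σ − 1) + 1/(σ − 1)² ). -/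
/-!
For `p > N` we have `1 / (p ^ σ - 1) ≤ N ^ σ / (N ^ σ - 1) * p ^ (-σ)`, so it suffices to bound
`∑_{n > N} log n / n ^ σ`. As `log t / t ^ σ` decreases for `t ≥ e ^ (1 / σ)`, this sum is at most
`∫_N^∞ log t / t ^ σ dt = N ^ (1 - σ) * (log N / (σ - 1) + 1 / (σ - 1) ^ 2)`, and
`N ^ σ * N ^ (1 - σ) = N`.
-/

open Real Set

/-- `logRpowTail σ x = ∫_x^∞ log t / t ^ σ dt` for `σ > 1`. -/
noncomputable def logRpowTail (σ x : ℝ) : ℝ :=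
  x ^ (1 - σ) * (log x / (σ - 1) + 1 / (σ - 1) ^ 2)

section LogRpowTail

variable {σ x : ℝ}

lemma hasDerivAt_logRpowTail (hσ : σ ≠ 1) (hx : 0 < x) :
    HasDerivAt (logRpowTail σ) (-(log x / x ^ σ)) x := by
  have hσ1 : σ - 1 ≠ 0 := sub_ne_zero.2 hσ
  refine ((hasDerivAt_rpow_const (p := 1 - σ) (Or.inl hx.ne')).mul
    (((hasDerivAt_log hx.ne').div_const (σ - 1)).add_const (1 / (σ - 1) ^ 2))).congr_deriv ?_
  have hsub : x ^ (1 - σ - 1) = (x ^ σ)⁻¹ := by rw [sub_sub_cancel_left, rpow_neg hx.le]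
  have hone : x ^ (1 - σ) = x * (x ^ σ)⁻¹ := by rw [rpow_sub hx, rpow_one, div_eq_mul_inv]
  rw [hsub, hone]
  field_simp
  ring

lemma logRpowTail_nonneg (hσ : 1 < σ) (hx : 1 ≤ x) : 0 ≤ logRpowTail σ x := by
  have := log_nonneg hx
  have := sub_pos.2 hσ
  have := rpow_nonneg (zero_le_one.trans hx) (1 - σ)
  unfold logRpowTail
  positivity

lemma one_le_add_of_exp_inv_le (hσ : 0 ≤ σ) (hx : exp σ⁻¹ ≤ x) (i : ℕ) :
    1 ≤ x + ↑(i + 1) := by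
  have := one_le_exp (inv_nonneg.2 hσ)
  have := (i + 1).cast_nonneg (α := ℝ)
  linarith

lemma log_div_rpow_nonneg (hx : 1 ≤ x) : 0 ≤ log x / x ^ σ :=
  div_nonneg (log_nonneg hx) (rpow_nonneg (zero_le_one.trans hx) σ)

lemma sum_range_log_div_rpow_le (hσ : 1 < σ) (hx : exp σ⁻¹ ≤ x) (n : ℕ) :
    ∑ i ∈ Finset.range n, log (x + ↑(i + 1)) / (x + ↑(i + 1)) ^ σ ≤ logRpowTail σ x := by
  have hx1 : 1 ≤ x := (one_le_exp (inv_nonneg.2 (by linarith))).trans hx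
  have hxn : x ≤ x + n := le_add_of_nonneg_right n.cast_nonneg
  have hanti : AntitoneOn (fun t => log t / t ^ σ) (Icc x (x + n)) :=
    (log_div_self_rpow_antitoneOn (by linarith)).mono
      (Icc_subset_Ici_self.trans (Ici_subset_Ici.2 hx))
  have hftc : ∫ t in x..x + n, -(log t / t ^ σ) = logRpowTail σ (x + n) - logRpowTail σ x := by
    refine intervalIntegral.integral_eq_sub_of_hasDerivAt (fun t ht => ?_) ?_
    · rw [uIcc_of_le hxn] at ht
      exact hasDerivAt_logRpowTail hσ.ne' (by linarith [ht.1])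
    · rw [← uIcc_of_le hxn] at hanti
      exact hanti.intervalIntegrable.neg
  have hsum := hanti.sum_le_integral
  have htail := logRpowTail_nonneg hσ (hx1.trans hxn)
  rw [intervalIntegral.integral_neg] at hftc
  linarith

lemma summable_log_div_rpow (hσ : 1 < σ) (hx : exp σ⁻¹ ≤ x) :
    Summable fun i : ℕ => log (x + ↑(i + 1)) / (x + ↑(i + 1)) ^ σ :=
  summable_of_sum_range_le
    (fun i => log_div_rpow_nonneg (one_le_add_of_exp_inv_le (by linarith) hx i))
    (sum_range_log_div_rpow_le hσ hx)

lemma tsum_log_div_rpow_le (hσ : 1 < σ) (hx : exp σ⁻¹ ≤ x) :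
    ∑' i : ℕ, log (x + ↑(i + 1)) / (x + ↑(i + 1)) ^ σ ≤ logRpowTail σ x :=
  Real.tsum_le_of_sum_range_le
    (fun i => log_div_rpow_nonneg (one_le_add_of_exp_inv_le (by linarith) hx i))
    (sum_range_log_div_rpow_le hσ hx)

end LogRpowTail

lemma log_div_rpow_sub_one_le {σ x y : ℝ} (hσ : 0 < σ) (hx : 1 < x) (hxy : x ≤ y) :
    log y / (y ^ σ - 1) ≤ x ^ σ / (x ^ σ - 1) * (log y / y ^ σ) := by
  have hxσ : 1 < x ^ σ := one_lt_rpow hx hσ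
  have hxyσ : x ^ σ ≤ y ^ σ := rpow_le_rpow (by linarith) hxy hσ.le
  have hlog : 0 ≤ log y := log_nonneg (by linarith)
  rw [div_mul_div_comm, div_le_div_iff₀ (by linarith) (mul_pos (by linarith) (by linarith))]
  nlinarith

lemma tsum_subtype_nat_gt_le {P : ℕ → Prop} {f : ℝ → ℝ} (N : ℕ)
    (hf : ∀ n : ℕ, N < n → 0 ≤ f n)
    (hsum : Summable fun i : ℕ => f (N + ↑(i + 1))) :
    ∑' n : {n : ℕ // P n ∧ N < n}, f n ≤ ∑' i : ℕ, f (N + ↑(i + 1)) := by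
  have hshift (n : {n : ℕ // P n ∧ N < n}) : (N : ℝ) + ↑(n.1 - (N + 1) + 1) = n.1 := by
    have := n.2.2
    rw [← Nat.cast_add]
    congr 1
    omega
  have hinj : Function.Injective fun n : {n : ℕ // P n ∧ N < n} => n.1 - (N + 1) := by
    intro m n hmn
    have := m.2.2
    have := n.2.2
    ext
    simp only at hmn
    omega
  refine Summable.tsum_le_tsum_of_inj _ hinj
    (fun i _ => Nat.cast_add (R := ℝ) N (i + 1) ▸ hf _ (by omega))
    (fun n => (hshift n).symm ▸ le_rfl) ?_ hsum
  simpa only [Function.comp_def, hshift] using hsum.comp_injective hinj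

theorem prime_tail_sum_bound (σ : ℝ) (hσ : 1 < σ) (N : ℕ) (hN : 3 ≤ N) :
    ∑' p : {p : ℕ // p.Prime ∧ N < p}, Real.log p / ((p : ℝ) ^ σ - 1) ≤
      (N : ℝ) / ((N : ℝ) ^ σ - 1) *
        (Real.log N / (σ - 1) + 1 / (σ - 1) ^ 2) := by
  have hN3 : (3 : ℝ) ≤ N := by exact_mod_cast hN
  have hNexp : exp σ⁻¹ ≤ N := calc
    exp σ⁻¹ ≤ exp 1 := exp_le_exp.2 (inv_le_one_of_one_le₀ hσ.le)
    _ ≤ N := exp_one_lt_three.le.trans hN3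
  have hnonneg {y : ℝ} (hy : 1 ≤ y) : 0 ≤ log y / (y ^ σ - 1) :=
    div_nonneg (log_nonneg hy) (sub_nonneg.2 (one_le_rpow hy (by linarith)))
  set C := (N : ℝ) ^ σ / ((N : ℝ) ^ σ - 1)
  have hC : 0 ≤ C :=
    div_nonneg (by positivity) (sub_nonneg.2 (one_le_rpow (by linarith) (by linarith)))
  have hterm (i : ℕ) : log (N + ↑(i + 1)) / ((N + ↑(i + 1) : ℝ) ^ σ - 1) ≤
      C * (log (N + ↑(i + 1)) / (N + ↑(i + 1) : ℝ) ^ σ) :=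
    log_div_rpow_sub_one_le (by linarith) (by linarith)
      (le_add_of_nonneg_right (i + 1).cast_nonneg)
  have hsum := (summable_log_div_rpow hσ hNexp).mul_left C
  have hsum' := hsum.of_nonneg_of_le
    (fun i => hnonneg (one_le_add_of_exp_inv_le (by linarith) hNexp i)) hterm
  have hNσ : (N : ℝ) ^ σ * (N : ℝ) ^ (1 - σ) = N := by
    rw [← rpow_add (by linarith), add_sub_cancel, rpow_one]
  calc ∑' p : {p : ℕ // p.Prime ∧ N < p}, log p / ((p : ℝ) ^ σ - 1)
      ≤ ∑' i : ℕ, log (N + ↑(i + 1)) / ((N + ↑(i + 1) : ℝ) ^ σ - 1) :=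
        tsum_subtype_nat_gt_le (P := Nat.Prime) (f := fun y => log y / (y ^ σ - 1)) N
          (fun n hn => hnonneg (by exact_mod_cast (by omega : 1 ≤ n))) hsum'
    _ ≤ ∑' i : ℕ, C * (log (N + ↑(i + 1)) / (N + ↑(i + 1) : ℝ) ^ σ) :=
        hsum'.tsum_le_tsum hterm hsum
    _ = C * ∑' i : ℕ, log (N + ↑(i + 1)) / (N + ↑(i + 1) : ℝ) ^ σ := tsum_mul_left
    _ ≤ C * logRpowTail σ N := by
        gcongr
        exact tsum_log_div_rpow_le hσ hNexp
    _ = ((N : ℝ) ^ σ * (N : ℝ) ^ (1 - σ)) / ((N : ℝ) ^ σ - 1) *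
          (log N / (σ - 1) + 1 / (σ - 1) ^ 2) := by
        rw [logRpowTail]
        ring
    _ = (N : ℝ) / ((N : ℝ) ^ σ - 1) * (log N / (σ - 1) + 1 / (σ - 1) ^ 2) := by rw [hNσ]
end

section
/- For all positive reals a and b, (1/(2π)) ∫₀^{2π} log|a + b·cos θ| dθ equals log((a + √(a² − b²))/2) if a > b, and equals log(b/2) if a ≤ b. -/
/-!
For `‖z‖ = 1` we have `z + z⁻¹ = 2 Re z`, so if `w, w⁻¹` are the roots of `b X² + 2a X + b` then
`|a + b Re z| = |b| / 2 · ‖z - w‖ · ‖z - w⁻¹‖`. Since the mean of `log ‖z - c‖` over the unit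
circle is `log⁺ ‖c‖`, the mean of `log |a + b cos θ|` is
`log (|b| / 2) + log⁺ ‖w‖ + log⁺ ‖w⁻¹‖ = log (|b| / 2) + |log ‖w‖|`. For `|b| < a` the roots are
real and `‖w‖ = (a + √(a² - b²)) / |b|`; for `|a| ≤ |b|` they are conjugate and lie on the circle.
-/

open Real intervalIntegral

open Filter Metric Complex ComplexConjugate

theorem Real.posLog_add_posLog_inv (x : ℝ) : log⁺ x + log⁺ x⁻¹ = |log x| := by
  rw [posLog_apply, posLog_apply, Real.log_inv, max_comm, max_comm 0,
    max_zero_add_max_neg_zero_eq_abs_self]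

theorem Complex.norm_sub_mul_norm_sub_inv {z w : ℂ} (hz : ‖z‖ = 1) (hw : w ≠ 0) :
    ‖z - w‖ * ‖z - w⁻¹‖ = ‖2 * (z.re : ℂ) - (w + w⁻¹)‖ := by
  have hz₀ : z ≠ 0 := norm_ne_zero_iff.mp (by simp [hz])
  have hinv : z⁻¹ = conj z := by
    rw [inv_def, normSq_eq_norm_sq, hz]; simp
  have hfactor : (z - w) * (z - w⁻¹) = z * (2 * (z.re : ℂ) - (w + w⁻¹)) := by
    rw [show (2 * (z.re : ℂ)) = z + conj z by rw [add_conj]; push_cast; ring, ← hinv]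
    field_simp
    ring
  rw [← norm_mul, hfactor, norm_mul, hz, one_mul]

theorem Real.circleAverage_comp_re (g : ℝ → ℝ) :
    circleAverage (fun z ↦ g z.re) 0 1 = (2 * π)⁻¹ * ∫ θ in 0..2 * π, g (cos θ) := by
  simp [circleAverage_def, circleMap_zero_re]

theorem Real.circleAverage_log_abs_add_mul_re {a b : ℝ} {w : ℂ} (hb : b ≠ 0)
    (hw : b * w ^ 2 + 2 * a * w + b = 0) :
    circleAverage (fun z ↦ log |a + b * z.re|) 0 1 = log (|b| / 2) + |log ‖w‖| := by
  have hw₀ : w ≠ 0 := by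
    rintro rfl
    simp_all
  have hsum : w + w⁻¹ = -(2 * a / b) := by
    have : (b : ℂ) ≠ 0 := ofReal_ne_zero.mpr hb
    field_simp
    linear_combination hw
  have hfactor {z : ℂ} (hz : ‖z‖ = 1) : |a + b * z.re| = |b| / 2 * (‖z - w‖ * ‖z - w⁻¹‖) := by
    rw [norm_sub_mul_norm_sub_inv hz hw₀, hsum,
      show 2 * (z.re : ℂ) - -(2 * a / b) = ((2 * z.re + 2 * a / b : ℝ) : ℂ) by push_cast; ring,
      norm_real, Real.norm_eq_abs, ← abs_two, ← abs_div, ← abs_mul]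
    congr 1
    field_simp
    ring
  have hlog : (fun z : ℂ ↦ log |a + b * z.re|) =ᶠ[codiscreteWithin (sphere 0 |1|)]
      fun z ↦ log (|b| / 2) + log ‖z - w‖ + log ‖z - w⁻¹‖ := by
    filter_upwards [self_mem_codiscreteWithin _,
      compl_finite_mem_codiscreteWithin (Set.toFinite {w, w⁻¹})] with z hz hzw
    simp only [abs_one, mem_sphere_iff_norm, sub_zero] at hz
    simp only [Set.mem_compl_iff, Set.mem_insert_iff, Set.mem_singleton_iff, not_or] at hzw
    rw [hfactor hz, Real.log_mul (by positivity) (by simp [sub_eq_zero, hzw.1, hzw.2]),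
      Real.log_mul (by simp [sub_eq_zero, hzw.1]) (by simp [sub_eq_zero, hzw.2]), add_assoc]
  rw [circleAverage_congr_codiscreteWithin hlog one_ne_zero, circleAverage_fun_add,
    circleAverage_fun_add, circleAverage_const, circleAverage_log_norm_sub_const_eq_posLog,
    circleAverage_log_norm_sub_const_eq_posLog, norm_inv, add_assoc, posLog_add_posLog_inv]
  all_goals fun_prop

theorem Real.circleAverage_log_abs_add_mul_re_of_abs_lt {a b : ℝ} (hb : b ≠ 0) (hab : |b| < a) :
    circleAverage (fun z ↦ log |a + b * z.re|) 0 1 = log ((a + √(a ^ 2 - b ^ 2)) / 2) := by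
  set s := √(a ^ 2 - b ^ 2)
  have hs : s ^ 2 = a ^ 2 - b ^ 2 := sq_sqrt (by nlinarith [sq_abs b, abs_nonneg b])
  have hb' : 0 < |b| := abs_pos.mpr hb
  have hroot : b * ((-((a + s) / b) : ℝ) : ℂ) ^ 2 + 2 * a * ((-((a + s) / b) : ℝ) : ℂ) + b = 0 := by
    norm_cast
    field_simp
    linear_combination hs
  have hnorm : 1 ≤ (a + s) / |b| := by
    rw [one_le_div hb']
    linarith [sqrt_nonneg (a ^ 2 - b ^ 2)]
  have has : 0 < a + s := by linarith [sqrt_nonneg (a ^ 2 - b ^ 2)]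
  rw [circleAverage_log_abs_add_mul_re hb hroot, norm_real, norm_neg, norm_eq_abs, abs_div,
    abs_of_pos has, abs_of_nonneg (log_nonneg hnorm),
    ← Real.log_mul (by positivity) (by positivity)]
  congr 1
  field_simp

theorem Real.circleAverage_log_abs_add_mul_re_of_abs_le {a b : ℝ} (hb : b ≠ 0) (hab : |a| ≤ |b|) :
    circleAverage (fun z ↦ log |a + b * z.re|) 0 1 = log (|b| / 2) := by
  set t := √(b ^ 2 - a ^ 2)
  have ht : t ^ 2 = b ^ 2 - a ^ 2 := sq_sqrt (by nlinarith [sq_abs a, sq_abs b, abs_nonneg a])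
  have hroot : b * ((-a + t * I) / b) ^ 2 + 2 * a * ((-a + t * I) / b) + b = 0 := by
    have : (b : ℂ) ≠ 0 := ofReal_ne_zero.mpr hb
    field_simp
    linear_combination -(by exact_mod_cast ht : (t : ℂ) ^ 2 = b ^ 2 - a ^ 2) + (t : ℂ) ^ 2 * I_sq
  have hnorm : ‖(-a + t * I) / b‖ = 1 := by
    rw [norm_div, ← ofReal_neg, norm_add_mul_I, norm_real, norm_eq_abs, neg_sq, ht,
      add_sub_cancel, sqrt_sq_eq_abs, div_self (abs_ne_zero.mpr hb)]
  rw [circleAverage_log_abs_add_mul_re hb hroot, hnorm, Real.log_one, abs_zero, add_zero]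

theorem integral_log_abs_add_cos (a b : ℝ) (ha : 0 < a) (hb : 0 < b) :
    (1 / (2 * Real.pi)) * ∫ θ in (0 : ℝ)..(2 * Real.pi), Real.log |a + b * Real.cos θ| =
      if b < a then Real.log ((a + Real.sqrt (a ^ 2 - b ^ 2)) / 2)
      else Real.log (b / 2) := by
  rw [one_div, ← circleAverage_comp_re fun x ↦ log |a + b * x|]
  split_ifs with hab
  · exact circleAverage_log_abs_add_mul_re_of_abs_lt hb.ne' (by rwa [abs_of_pos hb])
  · have hab' : |a| ≤ |b| := by rw [abs_of_pos ha, abs_of_pos hb]; linarith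
    rw [circleAverage_log_abs_add_mul_re_of_abs_le hb.ne' hab', abs_of_pos hb]
end

section
/- Let χ be a primitive Dirichlet character modulo q > 1 and m = min{n ≥ 2 : χ(n) ≠ 0}, and set G(s, χ) = −(m^s / (χ(m) log m)) L'(s, χ). Then G(s, χ) has no zeros in the half-plane Re(s) ≥ 8m; more precisely, |G(s, χ) − 1| ≤ 4·exp(−σ/(2m)) < 1 for σ = Re(s) ≥ 8m. -/
/-!
For `re s > 1` we have `G(s) = (m^s / (χ(m) log m)) ∑ χ(n) log n / n^s`: the terms with `n < m`
vanish and the term `n = m` equals `1`. Writing `n = m + j - 1` with `j ≥ 2`,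
Bernoulli's inequality gives `(n / m)^m ≥ j`, and `log n ≤ j log m`, so the `n`-th term of
`G(s) - 1` has norm at most `j^(1 - σ/m)`. For `σ ≥ 8m` these sum to at most
`8 · 2^(-σ/m) ≤ 4 exp(-σ/(2m))`.
-/

open Real

lemma log_le_sub_add_one_mul_log {m x : ℝ} (hm : 2 ≤ m) (hmx : m ≤ x) :
    log x ≤ (x - m + 1) * log m := by
  have hm0 : 0 < m := by linarith
  have hinv_le_log : 1 / m ≤ log m := by
    have : 1 / m ≤ 1 / 2 := one_div_le_one_div_of_le two_pos hm
    linarith [log_two_gt_d9, log_le_log two_pos hm]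
  have hquot : log (x / m) ≤ (x - m) * log m :=
    calc log (x / m) ≤ x / m - 1 := log_le_sub_one_of_pos (div_pos (hm0.trans_le hmx) hm0)
      _ = (x - m) * (1 / m) := by field_simp
      _ ≤ (x - m) * log m := mul_le_mul_of_nonneg_left hinv_le_log (by linarith)
  rw [log_div (by linarith) hm0.ne'] at hquot
  linarith

lemma div_rpow_le_sub_add_one_rpow {m : ℕ} {x σ : ℝ} (hm : 0 < m) (hmx : (m : ℝ) ≤ x)
    (hσ : 0 ≤ σ) : (m / x) ^ σ ≤ (x - m + 1) ^ (-(σ / m)) := by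
  have hm0 : (0 : ℝ) < m := by exact_mod_cast hm
  have hx0 : 0 < x := hm0.trans_le hmx
  have hbernoulli : x - m + 1 ≤ (x / m) ^ m := by
    have := one_add_mul_le_pow (a := (x - m) / m) (by
      have : 0 ≤ (x - m) / m := div_nonneg (by linarith) hm0.le
      linarith) m
    rwa [mul_div_cancel₀ _ hm0.ne', show 1 + (x - m) / m = x / m by field_simp; ring,
      add_comm] at this
  calc (m / x) ^ σ = ((x / m) ^ m) ^ (-(σ / m)) := by
        rw [← rpow_natCast, ← rpow_mul (by positivity), mul_neg, mul_div_cancel₀ _ hm0.ne',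
          rpow_neg (by positivity), ← inv_rpow (by positivity), inv_div]
    _ ≤ (x - m + 1) ^ (-(σ / m)) :=
        rpow_le_rpow_of_nonpos (by linarith) hbernoulli (by simp only [neg_nonpos]; positivity)

lemma log_div_rpow_le {m : ℕ} {x σ : ℝ} (hm : 2 ≤ m) (hmx : (m : ℝ) ≤ x)
    (hσ : 0 ≤ σ) : log x / x ^ σ ≤ log m / (m : ℝ) ^ σ * (x - m + 1) ^ (1 - σ / m) := by
  have hm2 : (2 : ℝ) ≤ m := by exact_mod_cast hm
  have hm0 : (0 : ℝ) < m := by linarith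
  have hx0 : 0 < x := hm0.trans_le hmx
  have hj : 0 < x - m + 1 := by linarith
  calc log x / x ^ σ = log x * (m / x) ^ σ / (m : ℝ) ^ σ := by
        rw [div_rpow hm0.le hx0.le]; field_simp
    _ ≤ (x - m + 1) * log m * (x - m + 1) ^ (-(σ / m)) / (m : ℝ) ^ σ := by
        refine div_le_div_of_nonneg_right (mul_le_mul (log_le_sub_add_one_mul_log hm2 hmx)
          (div_rpow_le_sub_add_one_rpow (by omega) hmx hσ) (by positivity) ?_) (by positivity)
        exact mul_nonneg hj.le (log_nonneg (by linarith))
    _ = log m / (m : ℝ) ^ σ * (x - m + 1) ^ (1 - σ / m) := by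
        rw [rpow_sub hj, rpow_one, rpow_neg hj.le]; ring

lemma summable_add_two_rpow {p : ℝ} (hp : 2 < p) :
    Summable fun k : ℕ ↦ ((k : ℝ) + 2) ^ (1 - p) := by
  have := (summable_nat_add_iff 2).mpr (Real.summable_nat_rpow.mpr (by linarith : 1 - p < -1))
  simpa only [Nat.cast_add, Nat.cast_ofNat] using this

lemma tsum_inv_add_two_sq_le_one : ∑' k : ℕ, 1 / ((k : ℝ) + 2) ^ 2 ≤ 1 := by
  have hsplit := hasSum_zeta_two.summable.sum_add_tsum_nat_add 2
  rw [hasSum_zeta_two.tsum_eq] at hsplit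
  simp only [Finset.sum_range_succ, Finset.sum_range_zero, Nat.cast_add, Nat.cast_ofNat] at hsplit
  norm_num at hsplit
  simp only [one_div]
  nlinarith [pi_lt_d2, pi_pos]

lemma tsum_add_two_rpow_le {p : ℝ} (hp : 3 ≤ p) :
    ∑' k : ℕ, ((k : ℝ) + 2) ^ (1 - p) ≤ 8 * (2 : ℝ) ^ (-p) := by
  have hterm (k : ℕ) :
      ((k : ℝ) + 2) ^ (1 - p) ≤ 8 * (2 : ℝ) ^ (-p) * (1 / ((k : ℝ) + 2) ^ 2) := by
    have hk : (0 : ℝ) < (k : ℝ) + 2 := by positivity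
    calc ((k : ℝ) + 2) ^ (1 - p) = ((k : ℝ) + 2) ^ (3 - p) * (1 / ((k : ℝ) + 2) ^ 2) := by
          rw [show 1 - p = (3 - p) + (-2 : ℤ) by push_cast; ring, rpow_add hk, rpow_intCast]
          simp [zpow_neg]
      _ ≤ (2 : ℝ) ^ (3 - p) * (1 / ((k : ℝ) + 2) ^ 2) :=
          mul_le_mul_of_nonneg_right (rpow_le_rpow_of_nonpos two_pos
            (le_add_of_nonneg_left k.cast_nonneg) (by linarith)) (by positivity)
      _ = 8 * (2 : ℝ) ^ (-p) * (1 / ((k : ℝ) + 2) ^ 2) := by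
          rw [sub_eq_add_neg, rpow_add two_pos]; norm_num
  have hsq : Summable fun k : ℕ ↦ 1 / ((k : ℝ) + 2) ^ 2 := by
    simpa using (summable_nat_add_iff 2).mpr hasSum_zeta_two.summable
  calc ∑' k : ℕ, ((k : ℝ) + 2) ^ (1 - p)
      ≤ ∑' k : ℕ, 8 * (2 : ℝ) ^ (-p) * (1 / ((k : ℝ) + 2) ^ 2) :=
        (summable_add_two_rpow (by linarith)).tsum_le_tsum hterm (hsq.mul_left _)
    _ ≤ 8 * (2 : ℝ) ^ (-p) := by
        rw [tsum_mul_left]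
        exact mul_le_of_le_one_right (by positivity) tsum_inv_add_two_sq_le_one

lemma eight_mul_two_rpow_neg_le {p : ℝ} (hp : 8 ≤ p) :
    8 * (2 : ℝ) ^ (-p) ≤ 4 * exp (-(p / 2)) := by
  rw [rpow_def_of_pos two_pos]
  have : log 2 + -(p * log 2) ≤ -(p / 2) := by nlinarith [log_two_gt_d9, log_two_lt_d9]
  calc 8 * exp (log 2 * -p) = 4 * exp (log 2 + -(p * log 2)) := by
        rw [exp_add, exp_log two_pos]; ring_nf
    _ ≤ 4 * exp (-(p / 2)) := by gcongr

open LSeries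

lemma LSeries_eq_term_add_tsum_nat_add {f : ℕ → ℂ} {s : ℂ} (hf : LSeriesSummable f s)
    {m : ℕ} (h : ∀ n < m, f n = 0) :
    LSeries f s = term f s m + ∑' k, term f s (k + (m + 1)) := by
  rw [LSeries, ← hf.sum_add_tsum_nat_add (m + 1), Finset.sum_range_succ,
    Finset.sum_eq_zero fun n hn ↦ by simp [term_def, h n (Finset.mem_range.mp hn)], zero_add]

lemma norm_term_logMul_le (f : ℕ → ℂ) (hf : ∀ n, ‖f n‖ ≤ 1) (s : ℂ) (n : ℕ) :
    ‖term (logMul f) s n‖ ≤ log n / (n : ℝ) ^ s.re := by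
  rw [norm_term_eq]
  split_ifs with hn
  · simp [hn]
  · have hlog : ‖Complex.log n‖ = log n := by
      rw [← Complex.natCast_log, Complex.norm_real, norm_of_nonneg (log_natCast_nonneg n)]
    rw [logMul, norm_mul, hlog]
    gcongr
    exact mul_le_of_le_one_right (log_natCast_nonneg n) (hf n)

namespace DirichletCharacter

lemma exists_two_le_apply_ne_zero {R : Type*} [CommMonoidWithZero R] [Nontrivial R] {q : ℕ}
    [NeZero q] (χ : DirichletCharacter R q) : ∃ n : ℕ, 2 ≤ n ∧ χ n ≠ 0 := by
  refine ⟨q + 1, by have := NeZero.pos q; omega, ?_⟩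
  simp

variable {q : ℕ} (χ : DirichletCharacter ℂ q)

lemma norm_natCast_cpow_div_mul_log {m : ℕ} (hm : 2 ≤ m) (hχm : χ m ≠ 0) (s : ℂ) :
    ‖(m : ℂ) ^ s / (χ m * log m)‖ = (m : ℝ) ^ s.re / log m := by
  rw [norm_div, norm_mul, ← (MulChar.apply_ne_zero_iff.mp hχm).unit_spec, unit_norm_eq_one,
    Complex.norm_natCast_cpow_of_pos (by omega), Complex.norm_real,
    norm_of_nonneg (log_natCast_nonneg m), one_mul]

lemma norm_mul_LSeries_logMul_sub_one_le {m : ℕ} (hm : 2 ≤ m) (hχm : χ m ≠ 0)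
    (hmin : ∀ n, 2 ≤ n → n < m → χ n = 0) {s : ℂ} (hs : 2 * m < s.re) :
    ‖(m : ℂ) ^ s / (χ m * log m) * LSeries (logMul (χ ·)) s - 1‖ ≤
      ∑' k : ℕ, ((k : ℝ) + 2) ^ (1 - s.re / m) := by
  have hm0 : (0 : ℝ) < m := by positivity
  have hp : 2 < s.re / m := by rwa [lt_div_iff₀ hm0]
  have hlogm : 0 < log m := log_pos (by exact_mod_cast hm)
  have hvanish : ∀ n < m, logMul (χ ·) n = 0 := by
    intro n hn
    rcases lt_or_ge n 2 with hn2 | hn2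
    · interval_cases n <;> simp
    · simp [hmin n hn2 hn]
  have hfirst : (m : ℂ) ^ s / (χ m * log m) * term (logMul (χ ·)) s m = 1 := by
    have : (m : ℂ) ^ s ≠ 0 := Complex.cpow_ne_zero_iff.mpr (.inl (by exact_mod_cast (by omega)))
    have : (log m : ℂ) ≠ 0 := by exact_mod_cast hlogm.ne'
    rw [term_of_ne_zero (by omega), logMul, ← Complex.natCast_log]
    field_simp
  have hbound (k : ℕ) : ‖term (logMul (χ ·)) s (k + (m + 1))‖ ≤
      log m / (m : ℝ) ^ s.re * ((k : ℝ) + 2) ^ (1 - s.re / m) := by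
    refine (norm_term_logMul_le _ (fun n ↦ χ.norm_le_one n) s _).trans ?_
    have hx : ((k + (m + 1) : ℕ) : ℝ) - m + 1 = k + 2 := by push_cast; ring
    simpa only [hx] using log_div_rpow_le hm (x := ((k + (m + 1) : ℕ) : ℝ))
      (by exact_mod_cast (by omega : m ≤ k + (m + 1))) (by linarith)
  have htail : Summable fun k ↦ ‖term (logMul (χ ·)) s (k + (m + 1))‖ :=
    ((summable_add_two_rpow hp).mul_left _).of_nonneg_of_le (fun _ ↦ norm_nonneg _) hbound
  have hsum : LSeriesSummable (logMul (χ ·)) s :=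
    (summable_nat_add_iff (m + 1)).mp htail.of_norm
  rw [LSeries_eq_term_add_tsum_nat_add hsum hvanish, mul_add, hfirst, add_sub_cancel_left,
    norm_mul, χ.norm_natCast_cpow_div_mul_log hm hχm]
  calc (m : ℝ) ^ s.re / log m * ‖∑' k, term (logMul (χ ·)) s (k + (m + 1))‖
      ≤ (m : ℝ) ^ s.re / log m *
          ∑' k : ℕ, log m / (m : ℝ) ^ s.re * ((k : ℝ) + 2) ^ (1 - s.re / m) := by
        gcongr
        exact (norm_tsum_le_tsum_norm htail).trans
          (htail.tsum_le_tsum hbound ((summable_add_two_rpow hp).mul_left _))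
    _ = ∑' k : ℕ, ((k : ℝ) + 2) ^ (1 - s.re / m) := by
        rw [tsum_mul_left, ← mul_assoc, div_mul_div_comm, mul_comm (log _),
          div_self (by positivity), one_mul]

end DirichletCharacter

lemma four_mul_exp_neg_lt_one {x : ℝ} (hx : 4 ≤ x) : 4 * exp (-x) < 1 := by
  have h5 : 5 ≤ exp x := by linarith [add_one_le_exp x]
  rw [exp_neg, ← div_eq_mul_inv, div_lt_one (exp_pos x)]
  linarith

open DirichletCharacter

theorem G_nonzero_right_general {q : ℕ} [NeZero q]
    (χ : DirichletCharacter ℂ q)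
    (m : ℕ) (hm : m = sInf {n : ℕ | 2 ≤ n ∧ χ n ≠ 0})
    (G : ℂ → ℂ)
    (hG : ∀ s : ℂ, G s = -((m : ℂ) ^ s / (χ m * Real.log m)) * deriv (LFunction χ) s)
    (s : ℂ) (hs : (8 * m : ℝ) ≤ s.re) :
    ‖G s - 1‖ ≤ 4 * Real.exp (-(s.re / (2 * m))) ∧
      4 * Real.exp (-(s.re / (2 * m))) < 1 ∧ G s ≠ 0 := by
  obtain ⟨hm2, hχm⟩ : 2 ≤ m ∧ χ m ≠ 0 :=
    hm ▸ Nat.sInf_mem χ.exists_two_le_apply_ne_zero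
  have hmin (n : ℕ) (hn : 2 ≤ n) (hnm : n < m) : χ n = 0 := by
    by_contra h
    exact (hm ▸ Nat.sInf_le ⟨hn, h⟩ : m ≤ n).not_gt hnm
  have hm2' : (2 : ℝ) ≤ m := by exact_mod_cast hm2
  have hp : 8 ≤ s.re / m := by rwa [le_div_iff₀ (by linarith)]
  have hderiv : deriv (LFunction χ) s = -LSeries (logMul (χ ·)) s := by
    rw [deriv_LFunction_eq_deriv_LSeries χ (by linarith), LSeries_deriv]
    rw [absicssaOfAbsConv_eq_one (NeZero.ne q)]
    exact_mod_cast (by linarith : (1 : ℝ) < s.re)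
  have hbound : ‖G s - 1‖ ≤ 4 * exp (-(s.re / (2 * m))) := by
    rw [hG, hderiv, neg_mul_neg]
    calc _ ≤ _ := χ.norm_mul_LSeries_logMul_sub_one_le hm2 hχm hmin (by linarith)
      _ ≤ 8 * 2 ^ (-(s.re / m)) := tsum_add_two_rpow_le (by linarith)
      _ ≤ 4 * exp (-(s.re / m / 2)) := eight_mul_two_rpow_neg_le hp
      _ = 4 * exp (-(s.re / (2 * m))) := by rw [div_div, mul_comm (m : ℝ)]
  have hlt : 4 * exp (-(s.re / (2 * m))) < 1 :=
    four_mul_exp_neg_lt_one (by rw [le_div_iff₀ (by positivity)]; linarith)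
  refine ⟨hbound, hlt, fun h ↦ ?_⟩
  rw [h, zero_sub, norm_neg, norm_one] at hbound
  linarith

theorem G_nonzero_right {q : ℕ} [NeZero q] (hq : 1 < q)
    (χ : DirichletCharacter ℂ q) (hχ : χ.IsPrimitive)
    (m : ℕ) (hm : m = sInf {n : ℕ | 2 ≤ n ∧ χ n ≠ 0})
    (G : ℂ → ℂ)
    (hG : ∀ s : ℂ, G s = -((m : ℂ) ^ s / (χ m * Real.log m)) * deriv (LFunction χ) s)
    (s : ℂ) (hs : (8 * m : ℝ) ≤ s.re) :
    ‖G s - 1‖ ≤ 4 * Real.exp (-(s.re / (2 * m))) ∧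
      4 * Real.exp (-(s.re / (2 * m))) < 1 ∧ G s ≠ 0 :=
  G_nonzero_right_general χ m hm G hG s hs
end

section
/- Let χ be an odd primitive Dirichlet character of conductor q > 4π·exp(c_E) (in particular q ≥ 23). If L'(1/2 + it, χ) = 0 for some real t, then s = 1/2 + it is a multiple zero of L(s, χ). -/
/-!
For odd `χ` we have `L = Λ / Γℝ(s + 1)`, `Λ` the completed L-function. The functional equation
`Λ(χ, 1 - s) = q^(s - 1/2) W Λ(χ⁻¹, s)` and the reflection `conj Λ(χ, conj s) = Λ(χ⁻¹, s)` give
`conj Λ(χ, conj (1 - s)) = q^(s - 1/2) W' Λ(χ, s)`. Differentiating at a point of the critical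
line, where `conj (1 - s) = s`, yields `Re (Λ'/Λ)(s) = -(log q)/2`, hence, if `L(s) ≠ 0`,
`Re (L'/L)(1/2 + it) = (log π - log q - Re ψ(3/4 + it/2))/2`.
Now `Re ψ(a + iy) ≥ ψ(a)`, since `|Γ(a + iy)/Γ(a)|² = ∏ₖ (1 + y²/(a + k)²)⁻¹` increases with `a`,
and `ψ(3/4) ≥ ψ(1/2) = -γ - log 4` by convexity of `log Γ`. So `Re (L'/L) < 0` once `q > 4π e^γ`.
-/

open Complex ComplexConjugate Finset DirichletCharacter

lemma Complex.ne_neg_natCast_of_re_pos {s : ℂ} (hs : 0 < s.re) (n : ℕ) : s ≠ -n := by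
  rintro rfl
  simp only [neg_re, natCast_re, Left.neg_pos_iff] at hs
  linarith [n.cast_nonneg (α := ℝ)]

lemma LSeries_conj (f : ℕ → ℂ) (s : ℂ) :
    conj (LSeries f (conj s)) = LSeries (fun n ↦ conj (f n)) s := by
  rw [LSeries, LSeries, Complex.conj_tsum]
  congr 1 with n
  rcases eq_or_ne n 0 with rfl | hn
  · simp
  · rw [LSeries.term_of_ne_zero hn, LSeries.term_of_ne_zero hn, map_div₀,
      cpow_conj _ _ (by simp [natCast_arg, Real.pi_ne_zero.symm]), conj_conj, conj_natCast]

lemma Complex.Gammaℝ_conj (s : ℂ) : Gammaℝ (conj s) = conj (Gammaℝ s) := by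
  have hπ : (Real.pi : ℂ).arg ≠ Real.pi := by
    rw [arg_ofReal_of_nonneg Real.pi_pos.le]; exact Real.pi_ne_zero.symm
  simp only [Gammaℝ_def, map_mul, ← Gamma_conj, map_div₀, map_ofNat]
  rw [show -conj s / 2 = conj (-s / 2) by simp [map_ofNat], cpow_conj _ _ hπ, conj_ofReal]

lemma Complex.hasDerivAt_Gammaℝ {s : ℂ} (hs : ∀ n : ℕ, s ≠ -(2 * n)) :
    HasDerivAt Gammaℝ (Gammaℝ s * (digamma (s / 2) - Real.log Real.pi) / 2) s := by
  have hs' : ∀ n : ℕ, s / 2 ≠ -n := fun n h ↦ hs n (by linear_combination 2 * h)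
  have hπ : (Real.pi : ℂ) ≠ 0 := ofReal_ne_zero.mpr Real.pi_ne_zero
  have hpow : HasDerivAt (fun z : ℂ ↦ (Real.pi : ℂ) ^ (-z / 2))
      ((Real.pi : ℂ) ^ (-s / 2) * log Real.pi * (-1 / 2)) s :=
    ((hasDerivAt_id' s).neg.div_const 2).const_cpow (.inl hπ)
  have hΓ : HasDerivAt (fun z : ℂ ↦ Gamma (z / 2)) (deriv Gamma (s / 2) * (1 / 2)) s :=
    (differentiableAt_Gamma _ hs').hasDerivAt.comp s ((hasDerivAt_id' s).div_const 2)
  have hΓ0 : Gamma (s / 2) ≠ 0 := Gamma_ne_zero hs'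
  refine ((hpow.mul hΓ).congr_deriv ?_).congr_of_eventuallyEq
    (.of_forall fun z ↦ Gammaℝ_def z)
  rw [Gammaℝ_def, digamma_def, logDeriv_apply, ofReal_log Real.pi_pos.le]
  field_simp
  ring

lemma Complex.normSq_GammaSeq (a y : ℝ) {n : ℕ} (hn : n ≠ 0) :
    normSq (GammaSeq (a + y * I) n)
      = ((n : ℝ) ^ a) ^ 2 * (n.factorial : ℝ) ^ 2
        / ∏ k ∈ range (n + 1), ((a + k) ^ 2 + y ^ 2) := by
  have hn' : (0 : ℝ) < n := by positivity
  rw [GammaSeq, map_div₀, map_mul, map_prod, ← Complex.sq_norm,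
    show ((n : ℂ)) = ((n : ℝ) : ℂ) by simp,
    norm_cpow_eq_rpow_re_of_pos hn', normSq_natCast]
  congr 1
  · simp [sq]
  · refine prod_congr rfl fun k _ ↦ ?_
    simp [normSq_apply, sq]

lemma Complex.normSq_GammaSeq_div (a y : ℝ) (ha : 0 < a) {n : ℕ} (hn : n ≠ 0) :
    normSq (GammaSeq (a + y * I) n) / normSq (GammaSeq a n)
      = ∏ k ∈ range (n + 1), ((a + k) ^ 2 / ((a + k) ^ 2 + y ^ 2)) := by
  have h0 := normSq_GammaSeq a 0 hn
  simp only [ofReal_zero, zero_mul, add_zero, ne_eq, OfNat.ofNat_ne_zero, not_false_eq_true,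
    zero_pow] at h0
  rw [normSq_GammaSeq a y hn, h0, prod_div_distrib]
  have : 0 < ((n : ℝ) ^ a) ^ 2 * (n.factorial : ℝ) ^ 2 := by positivity
  have : 0 < ∏ k ∈ range (n + 1), ((a + k : ℝ) ^ 2) := prod_pos fun k _ ↦ by positivity
  have : 0 < ∏ k ∈ range (n + 1), ((a + k : ℝ) ^ 2 + y ^ 2) :=
    prod_pos fun k _ ↦ by positivity
  field_simp

lemma Complex.monotoneOn_normSq_Gamma_div (y : ℝ) :
    MonotoneOn (fun a : ℝ ↦ normSq (Gamma (a + y * I)) / normSq (Gamma a)) (Set.Ioi 0) := by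
  have hlim : ∀ a : ℝ, 0 < a → Filter.Tendsto
      (fun n ↦ normSq (GammaSeq (a + y * I) n) / normSq (GammaSeq a n)) Filter.atTop
      (nhds (normSq (Gamma (a + y * I)) / normSq (Gamma a))) := fun a ha ↦
    ((continuous_normSq.tendsto _).comp (GammaSeq_tendsto_Gamma _)).div
      ((continuous_normSq.tendsto _).comp (GammaSeq_tendsto_Gamma _))
      (normSq_pos.mpr (Gamma_ne_zero_of_re_pos (by simpa using ha))).ne'
  intro a (ha : 0 < a) b (hb : 0 < b) hab
  refine le_of_tendsto_of_tendsto (hlim a ha) (hlim b hb) ?_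
  filter_upwards [Filter.eventually_ne_atTop 0] with n hn
  rw [normSq_GammaSeq_div a y ha hn, normSq_GammaSeq_div b y hb hn]
  refine prod_le_prod (fun k _ ↦ div_nonneg (sq_nonneg _) (by positivity)) fun k _ ↦ ?_
  have hk : (0 : ℝ) ≤ k := k.cast_nonneg
  rw [div_le_div_iff₀ (by positivity) (by positivity)]
  nlinarith [sq_nonneg y,
    pow_le_pow_left₀ (by linarith : 0 ≤ a + k) (by linarith : a + k ≤ b + k) 2]

lemma HasDerivAt.log_normSq {g : ℝ → ℂ} {g' : ℂ} {a : ℝ} (hg : HasDerivAt g g' a)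
    (h0 : g a ≠ 0) : HasDerivAt (fun b ↦ Real.log (normSq (g b))) (2 * (g' / g a).re) a := by
  have hsq : HasDerivAt (fun b ↦ normSq (g b)) (2 * (g' * conj (g a)).re) a := by
    simpa only [Complex.sq_norm, Complex.inner] using hg.norm_sq
  convert hsq.log (normSq_pos.mpr h0).ne' using 1
  rw [div_re, mul_re, conj_re, conj_im]
  ring

lemma Complex.hasDerivAt_log_normSq_Gamma {a : ℝ} (ha : 0 < a) (y : ℝ) :
    HasDerivAt (fun b : ℝ ↦ Real.log (normSq (Gamma (b + y * I))))
      (2 * (digamma (a + y * I)).re) a := by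
  have hz : 0 < (a + y * I : ℂ).re := by simpa using ha
  have hΓ : HasDerivAt (fun b : ℂ ↦ Gamma (b + y * I)) (deriv Gamma (a + y * I)) a :=
    (differentiableAt_Gamma _ (ne_neg_natCast_of_re_pos hz)).hasDerivAt.comp_add_const
  exact hΓ.comp_ofReal.log_normSq (Gamma_ne_zero_of_re_pos hz)

lemma Complex.re_digamma_le_re_digamma_add_mul_I {a : ℝ} (ha : 0 < a) (y : ℝ) :
    (digamma a).re ≤ (digamma (a + y * I)).re := by
  have hΓ : ∀ z : ℂ, 0 < z.re → 0 < normSq (Gamma z) := fun z hz ↦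
    normSq_pos.mpr (Gamma_ne_zero_of_re_pos hz)
  have hmono : MonotoneOn (fun b : ℝ ↦ Real.log (normSq (Gamma (b + y * I)))
      - Real.log (normSq (Gamma b))) (Set.Ioi 0) := by
    intro b (hb : 0 < b) c (hc : 0 < c) hbc
    have hb' := hΓ (b + y * I) (by simpa using hb)
    have hc' := hΓ (c + y * I) (by simpa using hc)
    dsimp only
    rw [← Real.log_div hb'.ne' (hΓ b hb).ne', ← Real.log_div hc'.ne' (hΓ c hc).ne']
    exact Real.log_le_log (div_pos hb' (hΓ b hb)) (monotoneOn_normSq_Gamma_div y hb hc hbc)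
  have hderiv := (hasDerivAt_log_normSq_Gamma ha y).sub (hasDerivAt_log_normSq_Gamma ha 0)
  simp only [ofReal_zero, zero_mul, add_zero] at hderiv
  have hacc : AccPt a (Filter.principal (Set.Ioi 0)) := by
    simpa using (PerfectSpace.univ_preperfect a (Set.mem_univ a)).nhds_inter (Ioi_mem_nhds ha)
  linarith [hderiv.hasDerivWithinAt.nonneg_of_monotoneOn hacc hmono]

lemma Complex.re_digamma_le_of_le {a b : ℝ} (ha : 0 < a) (hab : a ≤ b) :
    (digamma a).re ≤ (digamma b).re := by
  have hd : ∀ c : ℝ, 0 < c → HasDerivAt (Real.log ∘ Real.Gamma) (digamma c).re c := by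
    intro c hc
    have h := (hasDerivAt_log_normSq_Gamma hc 0).const_mul (1 / 2)
    simp only [ofReal_zero, zero_mul, add_zero, Gamma_ofReal, normSq_ofReal, ← sq,
      Real.log_pow] at h
    refine (h.congr_deriv (by ring)).congr_of_eventuallyEq (.of_forall fun x ↦ ?_)
    simp only [Function.comp_apply]
    ring
  have hmono := Real.convexOn_log_Gamma.monotoneOn_deriv fun c hc ↦ (hd c hc).differentiableAt
  have := hmono ha (ha.trans_le hab : 0 < b) hab
  rwa [(hd a ha).deriv, (hd b (ha.trans_le hab)).deriv] at this

lemma Complex.neg_log_four_sub_eulerMascheroniConstant_le_re_digamma {a : ℝ} (ha : 1 / 2 ≤ a)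
    (y : ℝ) : -Real.log 4 - Real.eulerMascheroniConstant ≤ (digamma (a + y * I)).re := by
  have h : (digamma (1 / 2)).re = -Real.log 4 - Real.eulerMascheroniConstant := by
    rw [digamma_one_half, show (4 : ℝ) = 2 ^ 2 by norm_num, Real.log_pow]
    simp [log_re]
  calc -Real.log 4 - Real.eulerMascheroniConstant = (digamma ((1 / 2 : ℝ) : ℂ)).re := by
        rw [← h]; norm_num
    _ ≤ (digamma a).re := re_digamma_le_of_le (by norm_num) ha
    _ ≤ (digamma (a + y * I)).re := re_digamma_le_re_digamma_add_mul_I (by linarith) y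

lemma re_logDeriv_of_conj_one_sub {f : ℂ → ℂ} {A : ℝ} (hA : 0 < A) {W : ℂ}
    (hf : ∀ z, conj (f (conj (1 - z))) = (A : ℂ) ^ (z - 1 / 2) * W * f z) {s : ℂ}
    (hs : s.re = 1 / 2) (hfd : DifferentiableAt ℂ f s) (hfs : f s ≠ 0) :
    (logDeriv f s).re = -Real.log A / 2 := by
  set C : ℂ := (A : ℂ) ^ (s - 1 / 2) * W
  have hconj : conj s = 1 - s := Complex.ext (by rw [conj_re, sub_re, one_re]; linarith) (by simp)
  have hval : conj (f s) = C * f s := by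
    have h := hf s
    rwa [map_sub, map_one, hconj, sub_sub_cancel] at h
  have hlhs : HasDerivAt (fun z ↦ conj (f (conj (1 - z)))) (-conj (deriv f s)) s := by
    have h := hfd.hasDerivAt.conj_conj
    rw [hconj] at h
    exact (h.comp s ((hasDerivAt_id' s).const_sub 1)).congr_deriv (by ring)
  have hrhs : HasDerivAt (fun z ↦ conj (f (conj (1 - z))))
      (C * (Real.log A * f s + deriv f s)) s := by
    rw [funext hf]
    have hpow := ((hasDerivAt_id' s).sub_const (1 / 2 : ℂ)).const_cpow (c := (A : ℂ))
      (.inl (ofReal_ne_zero.mpr hA.ne'))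
    exact ((hpow.mul_const W).mul hfd.hasDerivAt).congr_deriv (by rw [ofReal_log hA.le]; ring)
  have key : -conj (logDeriv f s) = Real.log A + logDeriv f s := by
    have hC : C ≠ 0 := by
      rintro hC
      exact hfs (by simpa [hC] using hval)
    rw [logDeriv_apply, map_div₀, hval, neg_div', hlhs.unique hrhs]
    field_simp
  have := congrArg re key
  simp only [neg_re, conj_re, add_re, ofReal_re] at this
  linarith

namespace DirichletCharacter

variable {N : ℕ}

lemma even_inv {χ : DirichletCharacter ℂ N} : χ⁻¹.Even ↔ χ.Even := by
  simp only [Even, MulChar.inv_apply_eq_inv', inv_eq_one]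

lemma Odd.ne_one {χ : DirichletCharacter ℂ N} (hχ : χ.Odd) : χ ≠ 1 := by
  rintro rfl
  exact Odd.not_even _ hχ (MulChar.one_apply isUnit_one.neg)

lemma IsPrimitive.inv {χ : DirichletCharacter ℂ N} (hχ : χ.IsPrimitive) :
    χ⁻¹.IsPrimitive := by
  rwa [IsPrimitive, conductor_inv]

lemma gammaFactor_inv (χ : DirichletCharacter ℂ N) : gammaFactor χ⁻¹ = gammaFactor χ := by
  ext s
  by_cases h : χ.Even
  · simp [gammaFactor, h, even_inv.mpr h]
  · simp [gammaFactor, h, mt even_inv.mp h]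

lemma gammaFactor_conj (χ : DirichletCharacter ℂ N) (s : ℂ) :
    gammaFactor χ (conj s) = conj (gammaFactor χ s) := by
  unfold gammaFactor
  split_ifs <;> simp [← Gammaℝ_conj]

lemma gammaFactor_ne_zero (χ : DirichletCharacter ℂ N) {s : ℂ} (hs : 0 < s.re) :
    gammaFactor χ s ≠ 0 := by
  unfold gammaFactor
  split_ifs
  · exact Gammaℝ_ne_zero_of_re_pos hs
  · exact Gammaℝ_ne_zero_of_re_pos (by rw [add_re, one_re]; linarith)

lemma Odd.hasDerivAt_gammaFactor {χ : DirichletCharacter ℂ N} (hχ : χ.Odd) {s : ℂ}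
    (hs : ∀ n : ℕ, s + 1 ≠ -(2 * n)) :
    HasDerivAt (gammaFactor χ)
      (gammaFactor χ s * (digamma ((s + 1) / 2) - Real.log Real.pi) / 2) s := by
  rw [show gammaFactor χ = fun z ↦ Gammaℝ (z + 1) from funext hχ.gammaFactor_def]
  exact (hasDerivAt_Gammaℝ hs).comp_add_const s 1

variable [NeZero N]

lemma completedLFunction_eq_gammaFactor_mul_LSeries (χ : DirichletCharacter ℂ N) {s : ℂ}
    (hs : 1 < s.re) : completedLFunction χ s = gammaFactor χ s * LSeries (fun n ↦ χ n) s := by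
  have hs0 : s ≠ 0 := by rintro rfl; norm_num at hs
  rw [← LFunction_eq_LSeries χ hs, LFunction_eq_completed_div_gammaFactor χ s (.inl hs0),
    mul_div_cancel₀ _ (χ.gammaFactor_ne_zero (by linarith))]

lemma completedLFunction_conj {χ : DirichletCharacter ℂ N} (hχ : χ ≠ 1) (s : ℂ) :
    conj (completedLFunction χ (conj s)) = completedLFunction χ⁻¹ s := by
  have hχ' : χ⁻¹ ≠ 1 := inv_ne_one.mpr hχ
  suffices conj ∘ completedLFunction χ ∘ conj = completedLFunction χ⁻¹ from congrFun this s
  refine AnalyticOnNhd.eq_of_eventuallyEq (z₀ := 2) ?_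
    (analyticOnNhd_univ_iff_differentiable.mpr (differentiable_completedLFunction hχ')) ?_
  · refine analyticOnNhd_univ_iff_differentiable.mpr fun z ↦ ?_
    exact differentiableAt_conj_conj_iff.mpr (differentiable_completedLFunction hχ _)
  · filter_upwards [(continuous_re.isOpen_preimage _ isOpen_Ioi).mem_nhds
      (show (2 : ℂ) ∈ re ⁻¹' Set.Ioi 1 by norm_num)] with z hz
    have hz' : 1 < (conj z).re := by simpa using hz
    simp only [Function.comp_apply, completedLFunction_eq_gammaFactor_mul_LSeries _ hz,
      completedLFunction_eq_gammaFactor_mul_LSeries _ hz', map_mul, gammaFactor_inv,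
      ← gammaFactor_conj, conj_conj, LSeries_conj]
    simp only [← RCLike.star_def, MulChar.star_apply']

lemma re_logDeriv_completedLFunction_of_re_eq_half {χ : DirichletCharacter ℂ N}
    (hχ : χ.IsPrimitive) (hχ1 : χ ≠ 1) {s : ℂ} (hs : s.re = 1 / 2)
    (hΛ : completedLFunction χ s ≠ 0) :
    (logDeriv (completedLFunction χ) s).re = -Real.log N / 2 := by
  refine re_logDeriv_of_conj_one_sub (Nat.cast_pos.mpr (NeZero.pos N)) (W := rootNumber χ⁻¹)
    (fun z ↦ ?_) hs (differentiable_completedLFunction hχ1 s) hΛ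
  rw [completedLFunction_conj hχ1, hχ.inv.completedLFunction_one_sub, inv_inv, ofReal_natCast]

lemma Odd.re_logDeriv_LFunction_of_re_eq_half {χ : DirichletCharacter ℂ N} (hodd : χ.Odd)
    (hχ : χ.IsPrimitive) {s : ℂ} (hs : s.re = 1 / 2) (hL : LFunction χ s ≠ 0) :
    (logDeriv (LFunction χ) s).re
      = (Real.log Real.pi - Real.log N - (digamma ((s + 1) / 2)).re) / 2 := by
  have hs0 : s ≠ 0 := fun h ↦ by norm_num [h] at hs
  have hpole : ∀ n : ℕ, s + 1 ≠ -(2 * n) := fun n h ↦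
    ne_neg_natCast_of_re_pos (s := (s + 1) / 2) (by rw [div_ofNat_re, add_re, hs, one_re]; norm_num)
      n (by rw [h]; ring)
  have hG : gammaFactor χ s ≠ 0 := χ.gammaFactor_ne_zero (by rw [hs]; norm_num)
  have hLΛ : LFunction χ =ᶠ[nhds s] fun z ↦ completedLFunction χ z / gammaFactor χ z :=
    (eventually_ne_nhds hs0).mono fun z hz ↦ LFunction_eq_completed_div_gammaFactor χ z (.inl hz)
  have hΛ : completedLFunction χ s ≠ 0 := fun h ↦ hL (by rw [hLΛ.eq_of_nhds, h, zero_div])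
  have hGd := hodd.hasDerivAt_gammaFactor hpole
  rw [(logDeriv_congr_nhds hLΛ).eq_of_nhds, logDeriv_div s hΛ hG
    (differentiable_completedLFunction hodd.ne_one s) hGd.differentiableAt, sub_re,
    re_logDeriv_completedLFunction_of_re_eq_half hχ hodd.ne_one hs hΛ, logDeriv_apply, hGd.deriv,
    mul_div_assoc, mul_div_cancel_left₀ _ hG, div_ofNat_re, sub_re, ofReal_re]
  ring

end DirichletCharacter

theorem L'_zero_implies_multiple_zero_odd {q : ℕ} [NeZero q]
    (hq : 4 * Real.pi * Real.exp Real.eulerMascheroniConstant < (q : ℝ))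
    (χ : DirichletCharacter ℂ q) (hχ : χ.IsPrimitive) (hodd : χ.Odd)
    (t : ℝ) (ht : deriv (LFunction χ) (1 / 2 + t * Complex.I) = 0) :
    LFunction χ (1 / 2 + t * Complex.I) = 0 := by
  by_contra hL
  have hre := hodd.re_logDeriv_LFunction_of_re_eq_half hχ (by simp) hL
  rw [logDeriv_apply, ht, zero_div, zero_re,
    show (1 / 2 + t * I + 1) / 2 = (3 / 4 : ℝ) + (t / 2 : ℝ) * I by push_cast; ring] at hre
  have hψ :=
    neg_log_four_sub_eulerMascheroniConstant_le_re_digamma (a := 3 / 4) (by norm_num) (t / 2)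
  have hlogq := Real.log_lt_log (by positivity) hq
  rw [Real.log_mul (by positivity) (Real.exp_ne_zero _), Real.log_mul (by norm_num)
    Real.pi_ne_zero, Real.log_exp] at hlogq
  linarith
end
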